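/- Let Φ be a reduced root system and R a commutative ring. The cup product of two closed cochains is closed: if d^p ω^p = 0 and d^q ω^q = 0 then d^{p+q}(ω^p ∪ ω^q) = 0. Moreover, the cup product of a closed cochain with an exact cochain (on either side) is exact: if d^p ω^p = 0 and ω^q = d^{q−1} η for some η ∈ C^{q−1}(Φ,R), then ω^p ∪ ω^q and ω^q ∪ ω^p are coboundaries. -/

import Mathlib

open scoped RealInnerProductSpace

/-- A reduced root system `Φ` in a real inner product space `V`:
a finite set of nonzero vectors spanning `V`, closed under the reflections it determines,
with integral Cartan numbers, such that the only multiples of a root in `Φ` are `±α`. -/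
structure ReducedRootSystem (V : Type) [NormedAddCommGroup V] [InnerProductSpace ℝ V] :
    Type where
  roots : Set V
  finite : roots.Finite
  nonzero : ∀ α ∈ roots, α ≠ 0
  spans : Submodule.span ℝ roots = ⊤
  reflect_mem : ∀ α ∈ roots, ∀ β ∈ roots, β - (2 * ⟪β, α⟫ / ⟪α, α⟫) • α ∈ roots
  integral : ∀ α ∈ roots, ∀ β ∈ roots, ∃ n : ℤ, 2 * ⟪β, α⟫ / ⟪α, α⟫ = (n : ℝ)
  reduced : ∀ α ∈ roots, ∀ t : ℝ, t • α ∈ roots → t = 1 ∨ t = -1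

variable {V : Type} [NormedAddCommGroup V] [InnerProductSpace ℝ V]

/-- `Φ₀ = Φ ∪ {0}`. -/
def rootsZero (Φ : ReducedRootSystem V) : Set V := insert 0 Φ.roots

/-- Contraction of a tuple at position `j` (adding the `j`-th and `(j+1)`-st entries). -/
def contractAt (l : List V) (j : ℕ) : List V :=
  l.take j ++ (l.getD j 0 + l.getD (j + 1) 0) :: l.drop (j + 2)

/-- `IsRootChainAux Φ n l`: the tuple `l` of length `n` is a generator of `T_n(Φ)`:
`T₁(Φ) = Φ₀`, and an `n`-tuple with entries in `Φ₀` lies in `T_n(Φ)` iff all its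
contractions lie in `T_{n-1}(Φ)`. -/
def IsRootChainAux (Φ : ReducedRootSystem V) : ℕ → List V → Prop
  | 0, _ => False
  | 1, l => ∃ r ∈ rootsZero Φ, l = [r]
  | n + 2, l => l.length = n + 2 ∧ (∀ r ∈ l, r ∈ rootsZero Φ) ∧
      ∀ j, j + 1 < l.length → IsRootChainAux Φ (n + 1) (contractAt l j)

/-- `l` is a generator of `T_{l.length}(Φ)`. -/
def IsRootChain (Φ : ReducedRootSystem V) (l : List V) : Prop := IsRootChainAux Φ l.length l

open Classical in
/-- Evaluation of a cochain on a chain generator: tuples containing `0` are identified with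
the zero chain `0ₙ`, on which any cochain vanishes. -/
noncomputable def chainEv {M : Type} [Zero M] (ω : List V → M) (l : List V) : M :=
  if (0 : V) ∈ l then 0 else ω l

/-- The coboundary operator `dⁿ` on cochains, `dⁿωⁿ(r₀|⋯|rₙ) = ωⁿ(∂ⁿ[r₀|⋯|rₙ])`. -/
noncomputable def cobd {M : Type} [AddCommGroup M] (ω : List V → M) (l : List V) : M :=
  chainEv ω l.tail
    + (∑ j ∈ Finset.range (l.length - 1), ((-1 : ℤ) ^ (j + 1)) • chainEv ω (contractAt l j))
    - ((-1 : ℤ) ^ (l.length - 1)) • chainEv ω l.dropLast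

/-- The cup product of a `p`-cochain `ωp` with a cochain `ωq`:
`(ωp ∪ ωq)(r₁|⋯|r_{p+q}) = ωp(r₁|⋯|r_p) · ωq(r_{p+1}|⋯|r_{p+q})`. -/
noncomputable def cup {R : Type} [CommRing R] (p : ℕ) (ωp ωq : List V → R)
    (l : List V) : R :=
  chainEv ωp (l.take p) * chainEv ωq (l.drop p)

/-! The cup product obeys the Leibniz rule `d(ω ∪ ω') = dω ∪ ω' + (-1)ᵖ ω ∪ dω'` on root chains of
length `p + q + 1`: the contractions at positions `j < p` only see the first `p + 1` entries,
those at positions `j ≥ p` only the last `q + 1` entries, and the two extra faces produced at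
the seam (dropping the last entry of the prefix, the first entry of the suffix) cancel.
Prefixes and suffixes of root chains are root chains, so for closed `ω` this gives closedness of
`ω ∪ ω'` for closed `ω'`, and `ω ∪ dη = (-1)ᵖ d(ω ∪ η)`, `dη ∪ ω = d(η ∪ ω)`. -/

set_option linter.unusedSectionVars false

theorem contractAt_length_add_append (a b : List V) (k : ℕ) :
    contractAt (a ++ b) (a.length + k) = a ++ contractAt b k := by
  simp only [contractAt, Nat.add_assoc, List.take_length_add_append, List.drop_length_add_append,
    List.getD_append_right _ _ _ _ (Nat.le_add_right _ _), Nat.add_sub_cancel_left,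
    List.append_assoc]

theorem contractAt_append_of_lt {a : List V} {j : ℕ} (hj : j + 1 < a.length) (b : List V) :
    contractAt (a ++ b) j = contractAt a j ++ b := by
  simp only [contractAt, List.take_append_of_le_length (by omega : j ≤ a.length),
    List.getD_append _ _ _ _ (by omega : j < a.length), List.getD_append _ _ _ _ hj,
    List.drop_append_of_le_length (by omega : j + 2 ≤ a.length), List.append_assoc,
    List.cons_append]

theorem length_contractAt {l : List V} {j : ℕ} (hj : j + 1 < l.length) :
    (contractAt l j).length = l.length - 1 := by
  simp only [contractAt, List.length_append, List.length_take, List.length_cons, List.length_drop]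
  omega

theorem IsRootChainAux.of_cons {Φ : ReducedRootSystem V} {x : V} {l : List V} {n : ℕ}
    (h : IsRootChainAux Φ (n + 2) (x :: l)) : IsRootChainAux Φ (n + 1) l := by
  induction n generalizing l with
  | zero =>
    obtain ⟨hlen, hmem, -⟩ := h
    obtain ⟨y, rfl⟩ := List.length_eq_one_iff.mp (Nat.succ_injective hlen)
    exact ⟨y, hmem y (by simp), rfl⟩
  | succ n ih =>
    obtain ⟨hlen, hmem, hcon⟩ := h
    exact ⟨Nat.succ_injective hlen, fun r hr => hmem r (.tail x hr),
      -- `contractAt (x :: l) (j + 1)` unfolds to `x :: contractAt l j`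
      fun j hj => ih (hcon (j + 1) (by simpa using hj))⟩

theorem IsRootChainAux.of_concat {Φ : ReducedRootSystem V} {l : List V} {y : V} {n : ℕ}
    (h : IsRootChainAux Φ (n + 2) (l ++ [y])) : IsRootChainAux Φ (n + 1) l := by
  induction n generalizing l with
  | zero =>
    obtain ⟨hlen, hmem, -⟩ := h
    obtain ⟨x, rfl⟩ := List.length_eq_one_iff.mp (by simpa using hlen)
    exact ⟨x, hmem x (by simp), rfl⟩
  | succ n ih =>
    obtain ⟨hlen, hmem, hcon⟩ := h
    have hl : l.length = n + 2 := by simpa using hlen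
    refine ⟨hl, fun r hr => hmem r (List.mem_append_left _ hr), fun j hj => ih ?_⟩
    rw [← contractAt_append_of_lt hj]
    exact hcon j (by rw [List.length_append, List.length_singleton]; omega)

namespace IsRootChain

variable {Φ : ReducedRootSystem V} {l : List V}

theorem ne_nil (h : IsRootChain Φ l) : l ≠ [] := by
  rintro rfl
  exact h

theorem of_cons {x : V} (h : IsRootChain Φ (x :: l)) (hl : l ≠ []) : IsRootChain Φ l := by
  obtain ⟨n, hn⟩ := Nat.exists_eq_add_one.mpr (List.length_pos_iff.mpr hl)
  unfold IsRootChain at h ⊢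
  rw [List.length_cons, hn] at h
  rw [hn]
  exact IsRootChainAux.of_cons h

theorem of_concat {y : V} (h : IsRootChain Φ (l ++ [y])) (hl : l ≠ []) : IsRootChain Φ l := by
  obtain ⟨n, hn⟩ := Nat.exists_eq_add_one.mpr (List.length_pos_iff.mpr hl)
  unfold IsRootChain at h ⊢
  rw [List.length_append, List.length_singleton, hn] at h
  rw [hn]
  exact IsRootChainAux.of_concat h

theorem of_append_right {a b : List V} (h : IsRootChain Φ (a ++ b)) (hb : b ≠ []) :
    IsRootChain Φ b := by
  induction a with
  | nil => exact h
  | cons x a ih => exact ih (h.of_cons (by simp [hb]))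

theorem of_append_left {a b : List V} (h : IsRootChain Φ (a ++ b)) (ha : a ≠ []) :
    IsRootChain Φ a := by
  induction b using List.reverseRecOn with
  | nil => simpa using h
  | append_singleton b y ih =>
    rw [← List.append_assoc] at h
    exact ih (h.of_concat (by simp [ha]))

theorem drop (h : IsRootChain Φ l) {m : ℕ} (hm : m < l.length) : IsRootChain Φ (l.drop m) := by
  rw [← List.take_append_drop m l] at h
  exact h.of_append_right (by simpa [List.drop_eq_nil_iff] using hm)

theorem take (h : IsRootChain Φ l) {m : ℕ} (hm : 0 < m) : IsRootChain Φ (l.take m) := by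
  have hl := h.ne_nil
  rw [← List.take_append_drop m l] at h
  exact h.of_append_left (by simp only [Ne, List.take_eq_nil_iff, hl, or_false]; omega)

end IsRootChain

theorem chainEv_congr {M : Type} [Zero M] {f g : List V → M} {l : List V}
    (h : (0 : V) ∉ l → f l = g l) : chainEv f l = chainEv g l := by
  unfold chainEv
  split_ifs with h0
  · rfl
  · exact h h0

theorem chainEv_of_notMem {M : Type} [Zero M] (f : List V → M) {l : List V} (h : (0 : V) ∉ l) :
    chainEv f l = f l := by
  rw [chainEv, if_neg h]

theorem chainEv_smul {R M : Type} [Monoid R] [AddCommGroup M] [DistribMulAction R M] (c : R)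
    (f : List V → M) (l : List V) : chainEv (c • f) l = c • chainEv f l := by
  unfold chainEv
  split_ifs <;> simp

theorem cobd_smul {R M : Type} [Monoid R] [AddCommGroup M] [DistribMulAction R M] (c : R)
    (f : List V → M) (l : List V) : cobd (c • f) l = c • cobd f l := by
  simp only [cobd, chainEv_smul, smul_add, smul_sub, Finset.smul_sum, smul_comm c]

section Cup

variable {R : Type} [CommRing R] (p : ℕ) (f g : List V → R) {l : List V}

theorem chainEv_cup (l : List V) : chainEv (cup p f g) l = cup p f g l := by
  by_cases h0 : (0 : V) ∈ l
  · have h0' : (0 : V) ∈ l.take p ∨ (0 : V) ∈ l.drop p := by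
      rwa [← List.mem_append, List.take_append_drop]
    rw [chainEv, if_pos h0, cup]
    rcases h0' with h0' | h0' <;> simp [chainEv, h0']
  · exact chainEv_of_notMem _ h0

theorem cup_tail (l : List V) :
    cup p f g l.tail = chainEv f (l.take (p + 1)).tail * chainEv g (l.drop (p + 1)) := by
  rw [cup, List.tail_take_eq_take_tail, Nat.add_sub_cancel, List.drop_tail]

theorem cup_dropLast (hp : p < l.length) :
    cup p f g l.dropLast = chainEv f (l.take p) * chainEv g (l.drop p).dropLast := by
  rw [cup, List.dropLast_drop_eq_drop_dropLast, List.dropLast_eq_take, List.take_take,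
    Nat.min_eq_left (by omega)]

theorem cup_contractAt_of_lt {j : ℕ} (hj : j < p) (hp : p < l.length) :
    cup p f g (contractAt l j) =
      chainEv f (contractAt (l.take (p + 1)) j) * chainEv g (l.drop (p + 1)) := by
  have hlen : (l.take (p + 1)).length = p + 1 := List.length_take_of_le hp
  have hc : (contractAt (l.take (p + 1)) j).length = p := by
    rw [length_contractAt (by omega), hlen, Nat.add_sub_cancel]
  conv_lhs => rw [← List.take_append_drop (p + 1) l, contractAt_append_of_lt (by omega)]
  rw [cup, List.take_left' hc, List.drop_left' hc]

theorem cup_contractAt_add (k : ℕ) (hp : p ≤ l.length) :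
    cup p f g (contractAt l (p + k)) =
      chainEv f (l.take p) * chainEv g (contractAt (l.drop p) k) := by
  have hlen : (l.take p).length = p := List.length_take_of_le hp
  have hsplit := contractAt_length_add_append (l.take p) (l.drop p) k
  rw [List.take_append_drop, hlen] at hsplit
  rw [cup, hsplit, List.take_left' hlen, List.drop_left' hlen]

theorem cobd_cup (q : ℕ) (hl : l.length = p + q + 1) :
    cobd (cup p f g) l =
      cobd f (l.take (p + 1)) * chainEv g (l.drop (p + 1))
        + (-1) ^ p * (chainEv f (l.take p) * cobd g (l.drop p)) := by
  have hfront : ∑ j ∈ Finset.range p, (-1 : R) ^ (j + 1) * cup p f g (contractAt l j) =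
      (∑ j ∈ Finset.range p, (-1) ^ (j + 1) * chainEv f (contractAt (l.take (p + 1)) j))
        * chainEv g (l.drop (p + 1)) := by
    rw [Finset.sum_mul]
    refine Finset.sum_congr rfl fun j hj => ?_
    rw [cup_contractAt_of_lt p f g (Finset.mem_range.mp hj) (by omega), mul_assoc]
  have hback : ∑ k ∈ Finset.range q, (-1 : R) ^ (p + k + 1) * cup p f g (contractAt l (p + k)) =
      (-1) ^ p * (chainEv f (l.take p) *
        ∑ k ∈ Finset.range q, (-1) ^ (k + 1) * chainEv g (contractAt (l.drop p) k)) := by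
    rw [Finset.mul_sum, Finset.mul_sum]
    refine Finset.sum_congr rfl fun k _ => ?_
    rw [cup_contractAt_add p f g k (by omega)]
    ring
  have htake : (l.take (p + 1)).length = p + 1 := List.length_take_of_le (by omega)
  have hdrop : (l.drop p).length = q + 1 := by rw [List.length_drop]; omega
  have hdropLast : (l.take (p + 1)).dropLast = l.take p := by
    rw [List.dropLast_eq_take, htake, List.take_take, Nat.add_sub_cancel,
      Nat.min_eq_left (by omega)]
  simp only [cobd, zsmul_eq_mul, Int.cast_pow, Int.cast_neg, Int.cast_one, chainEv_cup,
    cup_tail, cup_dropLast p f g (by omega : p < l.length), hl, htake, hdrop, Nat.add_sub_cancel,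
    Finset.sum_range_add, hfront, hback, hdropLast, List.tail_drop]
  ring

end Cup

def IsCocycle {M : Type} [AddCommGroup M] (Φ : ReducedRootSystem V) (p : ℕ) (ω : List V → M) :
    Prop :=
  ∀ l : List V, l.length = p + 1 → IsRootChain Φ l → cobd ω l = 0

section Congr

variable {Φ : ReducedRootSystem V} {R : Type} [CommRing R] {p q : ℕ} {f f' g g' : List V → R}
  {l : List V}

theorem cup_congr_left
    (hf : ∀ m : List V, m.length = p → IsRootChain Φ m → chainEv f m = chainEv f' m)
    (hp : 0 < p) (hl : p ≤ l.length) (hchain : IsRootChain Φ l) :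
    cup p f g l = cup p f' g l := by
  rw [cup, cup, hf _ (List.length_take_of_le hl) (hchain.take hp)]

theorem cup_congr_right
    (hg : ∀ m : List V, m.length = q → IsRootChain Φ m → chainEv g m = chainEv g' m)
    (hq : 0 < q) (hl : l.length = p + q) (hchain : IsRootChain Φ l) :
    cup p f g l = cup p f g' l := by
  rw [cup, cup, hg _ (by rw [List.length_drop]; omega) (hchain.drop (by omega))]

end Congr

namespace IsCocycle

variable {Φ : ReducedRootSystem V} {R : Type} [CommRing R] {p q : ℕ} {ω ω' : List V → R}
  {l : List V}

theorem cup_cobd_right (hω : IsCocycle Φ p ω) (η : List V → R) {n : ℕ}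
    (hl : l.length = p + n + 1) (hchain : IsRootChain Φ l) :
    cup p ω (cobd η) l = chainEv (cobd ((-1 : R) ^ p • cup p ω η)) l := by
  rw [← chainEv_cup]
  refine chainEv_congr fun h0 => ?_
  have h0' : (0 : V) ∉ l.drop p := fun h => h0 (List.mem_of_mem_drop h)
  rw [cobd_smul, cobd_cup p ω η n hl,
    hω _ (List.length_take_of_le (by omega)) (hchain.take p.succ_pos), cup,
    chainEv_of_notMem _ h0', smul_eq_mul, zero_mul, zero_add, ← mul_assoc, ← mul_pow,
    neg_one_mul, neg_neg, one_pow, one_mul]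

theorem cup_cobd_left (hω : IsCocycle Φ p ω) (η : List V → R) {n : ℕ}
    (hl : l.length = n + 1 + p) (hchain : IsRootChain Φ l) :
    cup (n + 1) (cobd η) ω l = chainEv (cobd (cup n η ω)) l := by
  rw [← chainEv_cup]
  refine chainEv_congr fun h0 => ?_
  have h0' : (0 : V) ∉ l.take (n + 1) := fun h => h0 (List.mem_of_mem_take h)
  rw [cobd_cup n η ω p (by omega),
    hω _ (by rw [List.length_drop]; omega) (hchain.drop (by omega)), cup,
    chainEv_of_notMem _ h0', mul_zero, mul_zero, add_zero]

theorem cup (hω : IsCocycle Φ p ω) (hω' : IsCocycle Φ q ω') :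
    IsCocycle Φ (p + q) (cup p ω ω') :=
  fun l hl hchain => by
    rw [cobd_cup p ω ω' q hl, hω _ (List.length_take_of_le (by omega)) (hchain.take p.succ_pos),
      hω' _ (by rw [List.length_drop]; omega) (hchain.drop (by omega)), zero_mul, mul_zero,
      mul_zero, add_zero]

end IsCocycle

theorem cup_closed_and_exact_general
    {V : Type} [NormedAddCommGroup V] [InnerProductSpace ℝ V]
    (Φ : ReducedRootSystem V) (R : Type) [CommRing R] (p q : ℕ) (hq : 1 ≤ q)
    (ωp ωq : List V → R)
    (hclosedp : ∀ l : List V, l.length = p + 1 → IsRootChain Φ l → cobd ωp l = 0) :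
    ((∀ l : List V, l.length = q + 1 → IsRootChain Φ l → cobd ωq l = 0) →
        ∀ l : List V, l.length = p + q + 1 → IsRootChain Φ l → cobd (cup p ωp ωq) l = 0) ∧
    (∀ η : List V → R,
      (∀ l : List V, l.length = q → IsRootChain Φ l → chainEv ωq l = chainEv (cobd η) l) →
      (∃ ξ : List V → R, ∀ l : List V, l.length = p + q → IsRootChain Φ l →
          chainEv (cup p ωp ωq) l = chainEv (cobd ξ) l) ∧
      (∃ ξ : List V → R, ∀ l : List V, l.length = q + p → IsRootChain Φ l →
          chainEv (cup q ωq ωp) l = chainEv (cobd ξ) l)) := by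
  have hωp : IsCocycle Φ p ωp := hclosedp
  obtain ⟨n, rfl⟩ := Nat.exists_eq_add_of_le' hq
  refine ⟨hωp.cup, fun η hη => ⟨⟨(-1 : R) ^ p • cup p ωp η, fun l hl hchain => ?_⟩,
    ⟨cup n η ωp, fun l hl hchain => ?_⟩⟩⟩
  · rw [chainEv_cup, cup_congr_right hη n.succ_pos hl hchain]
    exact hωp.cup_cobd_right η hl hchain
  · rw [chainEv_cup, cup_congr_left hη n.succ_pos (by omega) hchain]
    exact hωp.cup_cobd_left η hl hchain

/-- The cup product of two closed cochains is closed, and the cup product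
of a closed cochain with an exact cochain (on either side) is exact.  (Cochain identities
are identities of forms on `C_n(Φ)`, i.e. they hold on every chain of the relevant length.) -/
theorem cup_closed_and_exact
    {V : Type} [NormedAddCommGroup V] [InnerProductSpace ℝ V] [FiniteDimensional ℝ V]
    (Φ : ReducedRootSystem V) (R : Type) [CommRing R] (p q : ℕ) (hp : 1 ≤ p) (hq : 1 ≤ q)
    (ωp ωq : List V → R)
    (hclosedp : ∀ l : List V, l.length = p + 1 → IsRootChain Φ l → cobd ωp l = 0) :
    ((∀ l : List V, l.length = q + 1 → IsRootChain Φ l → cobd ωq l = 0) →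
        ∀ l : List V, l.length = p + q + 1 → IsRootChain Φ l → cobd (cup p ωp ωq) l = 0) ∧
    (∀ η : List V → R,
      (∀ l : List V, l.length = q → IsRootChain Φ l → chainEv ωq l = chainEv (cobd η) l) →
      (∃ ξ : List V → R, ∀ l : List V, l.length = p + q → IsRootChain Φ l →
          chainEv (cup p ωp ωq) l = chainEv (cobd ξ) l) ∧
      (∃ ξ : List V → R, ∀ l : List V, l.length = q + p → IsRootChain Φ l →
          chainEv (cup q ωq ωp) l = chainEv (cobd ξ) l)) :=
  cup_closed_and_exact_general Φ R p q hq ωp ωq hclosedp
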